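/- The Hausdorff dimension of E_*(τ) = {x ∈ R^2 : |qx - r|_∞ ≤ |q|_∞^{-τ} for infinitely many (q,r) ∈ Z[i] × Z[i]} is at most min(4/(1+τ), 2) for τ > 1. -/

import Mathlib

/-!
For `x` with `‖x‖ ≤ R`, every approximation `‖q x - r‖_∞ ≤ ‖q‖_∞^{-τ}` with `q ≠ 0` puts `x` in the
ball of radius `√2 ‖q‖_∞^{-(1+τ)}` around `r / q`, and forces `‖r‖_∞ ≲ R ‖q‖_∞`. So for each `q`
only `O(‖q‖_∞²)` of these balls meet the ball of radius `R`, and the `s`-dimensional cost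
`∑ diam^s` of all of them is `∑_q ‖q‖_∞^{2-(1+τ)s}`, finite as soon as `(1+τ)s > 4`. Every point of
the set lies in infinitely many of the balls, so by the Hausdorff–Cantelli lemma its `s`-dimensional
Hausdorff measure vanishes.
-/

open MeasureTheory Complex GaussianInt

noncomputable def gnorm (q : GaussianInt) : ℝ := max |(q.re : ℝ)| |(q.im : ℝ)|
noncomputable def snorm2 (z : ℂ) : ℝ := max |z.re| |z.im|
noncomputable def ec (t : ℝ) : ℂ := Complex.exp (-2 * Real.pi * Complex.I * t)
def inn (ξ x : ℂ) : ℝ := ξ.re * x.re + ξ.im * x.im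
def unitSquare : Set ℂ := {z : ℂ | z.re ∈ Set.Icc (0:ℝ) 1 ∧ z.im ∈ Set.Icc (0:ℝ) 1}
noncomputable def fcoeff (f : ℂ → ℂ) (ξ : ℂ) : ℂ := ∫ x in unitSquare, ec (inn ξ x) * f x
noncomputable def ftr (f : ℂ → ℂ) (ξ : ℂ) : ℂ := ∫ x : ℂ, ec (inn ξ x) * f x
noncomputable def Phi (φ : ℂ → ℝ) (ε : ℝ) (x : ℂ) : ℝ :=
  ∑' r : GaussianInt, ε⁻¹ ^ 2 * φ (ε⁻¹ • (x - toComplex r))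
noncomputable def Z2 (M : ℝ) : Set GaussianInt := {q | M / 2 < gnorm q ∧ gnorm q ≤ M}
noncomputable def FM (φ : ℂ → ℝ) (τ M : ℝ) (x : ℂ) : ℝ :=
  ((Z2 M).ncard : ℝ)⁻¹ * ∑' q : (Z2 M), Phi φ (M ^ (-τ) / 2) (toComplex q.1 * x)
noncomputable def PM (M : ℝ) : Set GaussianInt := {q | Prime q ∧ M / 2 < gnorm q ∧ gnorm q ≤ M}
noncomputable def FMP (φ : ℂ → ℝ) (τ M : ℝ) (x : ℂ) : ℝ :=
  ((PM M).ncard : ℝ)⁻¹ * ∑' q : (PM M), Phi φ (M ^ (-τ) / 2) (toComplex q.1 * x)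
noncomputable def mhat (μ : Measure ℂ) (ξ : ℂ) : ℂ := ∫ x, ec (inn ξ x) ∂μ

open Filter Set Metric
open scoped ENNReal Topology

lemma ediam_closedBall_le_ofReal {X : Type*} [PseudoMetricSpace X] (c : X) (ρ : ℝ) :
    ediam (closedBall c ρ) ≤ ENNReal.ofReal (2 * ρ) :=
  ediam_le_of_forall_dist_le fun x hx y hy =>
    (dist_triangle_right x y c).trans (by linarith [mem_closedBall.1 hx, mem_closedBall.1 hy])

theorem hausdorffMeasure_limsup_cofinite_eq_zero {ι X : Type*} [Countable ι] [EMetricSpace X]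
    [MeasurableSpace X] [BorelSpace X] {s : ℝ} (hs : 0 < s) {B : ι → Set X}
    (hB : ∑' i, ediam (B i) ^ s ≠ ∞) : μH[s] (limsup B cofinite) = 0 := by
  set tail : Finset ι → ℝ≥0∞ := fun F => ∑' i : {i // i ∉ F}, ediam (B i) ^ s
  have htail : Tendsto tail atTop (𝓝 0) := ENNReal.tendsto_tsum_compl_atTop_zero hB
  have hdiam : Tendsto (fun F => tail F ^ s⁻¹) atTop (𝓝 0) := by
    simpa [Function.comp_def, ENNReal.zero_rpow_of_pos (inv_pos.2 hs)] using
      ((ENNReal.continuous_rpow_const (y := s⁻¹)).tendsto 0).comp htail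
  refine le_antisymm ?_ zero_le
  calc μH[s] (limsup B cofinite)
      ≤ liminf tail atTop := by
        refine Measure.hausdorffMeasure_le_liminf_tsum s _ _ hdiam
          (fun F (i : {i // i ∉ F}) => B i) (.of_forall fun F i => ?_) (.of_forall fun F x hx => ?_)
        · rw [← ENNReal.rpow_rpow_inv hs.ne' (ediam (B i))]
          exact ENNReal.rpow_le_rpow (ENNReal.le_tsum i) (inv_nonneg.2 hs.le)
        · rw [mem_limsup_iff_frequently_mem, frequently_cofinite_iff_infinite] at hx
          obtain ⟨i, hxi, hiF⟩ := hx.exists_notMem_finset F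
          exact mem_iUnion.2 ⟨⟨i, hiF⟩, hxi⟩
    _ = 0 := htail.liminf_eq

lemma gnorm_nonneg (q : GaussianInt) : 0 ≤ gnorm q :=
  (abs_nonneg _).trans (le_max_left _ _)

lemma gnorm_eq_snorm2 (q : GaussianInt) : gnorm q = snorm2 q := by
  simp [gnorm, snorm2]

lemma snorm2_le_norm (z : ℂ) : snorm2 z ≤ ‖z‖ :=
  max_le (abs_re_le_norm z) (abs_im_le_norm z)

lemma gnorm_le_norm (q : GaussianInt) : gnorm q ≤ ‖(q : ℂ)‖ :=
  gnorm_eq_snorm2 q ▸ snorm2_le_norm q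

lemma one_le_gnorm {q : GaussianInt} (hq : q ≠ 0) : 1 ≤ gnorm q := by
  by_contra! h
  rw [gnorm, max_lt_iff, ← Int.cast_abs, ← Int.cast_abs] at h
  exact hq (Zsqrtd.ext (Int.abs_lt_one_iff.1 (mod_cast h.1)) (Int.abs_lt_one_iff.1 (mod_cast h.2)))

@[simps]
def gaussianIntEquiv : GaussianInt ≃ (Fin 2 → ℤ) where
  toFun z := ![z.re, z.im]
  invFun x := ⟨x 0, x 1⟩
  left_inv _ := rfl
  right_inv x := by ext i; fin_cases i <;> rfl

instance : Countable GaussianInt :=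
  gaussianIntEquiv.injective.countable

lemma gnorm_eq_norm_gaussianIntEquiv (q : GaussianInt) : gnorm q = ‖gaussianIntEquiv q‖ := by
  show max |(q.re : ℝ)| |(q.im : ℝ)| = ‖![q.re, q.im]‖
  simp [EisensteinSeries.norm_eq_max_natAbs]

lemma summable_gnorm_rpow_neg {k : ℝ} (hk : 2 < k) :
    Summable fun q : GaussianInt => gnorm q ^ (-k) := by
  simpa [Function.comp_def, ← gnorm_eq_norm_gaussianIntEquiv] using
    gaussianIntEquiv.summable_iff.2 (EisensteinSeries.summable_one_div_norm_rpow hk)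

lemma encard_setOf_gnorm_le {L : ℝ} (hL : 0 ≤ L) :
    ({z : GaussianInt | gnorm z ≤ L}.encard : ℝ≥0∞) ≤ ENNReal.ofReal ((2 * L + 1) ^ 2) := by
  set S := Finset.Icc (-⌊L⌋) ⌊L⌋
  have hmem {a : ℤ} (ha : |(a : ℝ)| ≤ L) : a ∈ S := by
    rw [Finset.mem_Icc, neg_le, Int.le_floor, Int.le_floor, Int.cast_neg]
    exact (abs_le'.1 ha).symm
  have hsub : gaussianIntEquiv '' {z | gnorm z ≤ L} ⊆ ↑(Fintype.piFinset fun _ : Fin 2 => S) := by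
    rintro _ ⟨z, hz, rfl⟩
    rw [mem_ofPred_eq, gnorm, max_le_iff] at hz
    simp [Fin.forall_fin_two, hmem hz.1, hmem hz.2]
  have hS : (S.card : ℝ) ≤ 2 * L + 1 := by
    have hfloor : 0 ≤ ⌊L⌋ := Int.floor_nonneg.2 hL
    rw [Int.card_Icc, ← Int.cast_natCast, Int.toNat_of_nonneg (by omega)]
    push_cast
    linarith [Int.floor_le L]
  calc ({z : GaussianInt | gnorm z ≤ L}.encard : ℝ≥0∞)
      = (gaussianIntEquiv '' {z | gnorm z ≤ L}).encard := by
        rw [gaussianIntEquiv.injective.encard_image]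
    _ ≤ (Fintype.piFinset fun _ : Fin 2 => S).card := by
        exact_mod_cast (encard_le_encard hsub).trans_eq (encard_coe_eq_coe_finsetCard _)
    _ ≤ _ := by
        rw [Fintype.card_piFinset_const, ← ENNReal.ofReal_natCast]
        exact ENNReal.ofReal_le_ofReal (by push_cast; gcongr)

def approxRegion (τ : ℝ) (p : GaussianInt × GaussianInt) : Set ℂ :=
  {x | snorm2 (toComplex p.1 * x - toComplex p.2) ≤ gnorm p.1 ^ (-τ)}

-- With `q = 0` the bound is `0 ^ (-τ)`, which Lean evaluates to `0` when `τ ≠ 0`.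
lemma snd_eq_zero_of_mem_approxRegion {τ : ℝ} (hτ : τ ≠ 0) {p : GaussianInt × GaussianInt}
    {x : ℂ} (hx : x ∈ approxRegion τ p) (hp : p.1 = 0) : p.2 = 0 := by
  by_contra hr
  have hx' : snorm2 (-(p.2 : ℂ)) ≤ 0 := by
    simpa [approxRegion, hp, gnorm_eq_snorm2, snorm2, Real.zero_rpow (neg_ne_zero.2 hτ)] using hx
  have : snorm2 (-(p.2 : ℂ)) = gnorm p.2 := by simp [gnorm_eq_snorm2, snorm2]
  linarith [one_le_gnorm hr]

lemma approxRegion_subset_closedBall (τ : ℝ) {p : GaussianInt × GaussianInt} (hp : p.1 ≠ 0) :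
    approxRegion τ p ⊆ closedBall ((p.2 : ℂ) / p.1) (√2 * gnorm p.1 ^ (-(1 + τ))) := by
  intro x hx
  have hq : (p.1 : ℂ) ≠ 0 := toComplex_eq_zero.not.2 hp
  have hg : 0 < gnorm p.1 := one_pos.trans_le (one_le_gnorm hp)
  calc dist x (p.2 / p.1) = ‖(p.1 : ℂ) * x - p.2‖ / ‖(p.1 : ℂ)‖ := by
        rw [dist_eq_norm, ← norm_div, sub_div, mul_div_cancel_left₀ _ hq]
    _ ≤ √2 * gnorm p.1 ^ (-τ) / gnorm p.1 :=
        div_le_div₀ (by positivity)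
          ((norm_le_sqrt_two_mul_max _).trans (mul_le_mul_of_nonneg_left hx (by positivity)))
          hg (gnorm_le_norm p.1)
    _ = √2 * gnorm p.1 ^ (-(1 + τ)) := by
        rw [show -(1 + τ) = -τ - 1 by ring, Real.rpow_sub_one hg.ne', mul_div_assoc]

lemma gnorm_le_of_dist_div_le {q r : GaussianInt} (hq : q ≠ 0) {x : ℂ} {δ : ℝ}
    (hx : dist x (r / q) ≤ δ) : gnorm r ≤ √2 * (‖x‖ + δ) * gnorm q := by
  have hq' : (q : ℂ) ≠ 0 := toComplex_eq_zero.not.2 hq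
  calc gnorm r ≤ ‖(q : ℂ)‖ * ‖(r : ℂ) / q‖ := by
        rw [← norm_mul, mul_div_cancel₀ _ hq']; exact gnorm_le_norm r
    _ ≤ (√2 * gnorm q) * (‖x‖ + δ) := by
        refine mul_le_mul ?_ ?_ (norm_nonneg _) (mul_nonneg (by positivity) (gnorm_nonneg q))
        · rw [gnorm_eq_snorm2]; exact norm_le_sqrt_two_mul_max _
        · linarith [norm_le_norm_add_norm_sub x ((r : ℂ) / q), dist_eq_norm x ((r : ℂ) / q)]
    _ = √2 * (‖x‖ + δ) * gnorm q := by ring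

def approxBall (τ R : ℝ) (p : GaussianInt × GaussianInt) : Set ℂ :=
  closedBall ((p.2 : ℂ) / p.1) (√2 * gnorm p.1 ^ (-(1 + τ))) ∩ closedBall 0 R

lemma limsup_approxRegion_inter_closedBall_subset {τ : ℝ} (hτ : τ ≠ 0) (R : ℝ) :
    limsup (approxRegion τ) cofinite ∩ closedBall 0 R ⊆ limsup (approxBall τ R) cofinite := by
  rintro x ⟨hx, hxR⟩
  simp only [mem_limsup_iff_frequently_mem, frequently_cofinite_iff_infinite] at hx ⊢
  refine (hx.sdiff (finite_singleton (0, 0))).mono ?_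
  rintro p ⟨hpx, hp0⟩
  have hp : p.1 ≠ 0 := fun hp =>
    hp0 (Prod.ext hp (snd_eq_zero_of_mem_approxRegion hτ hpx hp))
  exact ⟨approxRegion_subset_closedBall τ hp hpx, hxR⟩

lemma ediam_approxBall_rpow_le_indicator {τ R s : ℝ} (hτ : -1 < τ) (hs : 0 < s)
    {q : GaussianInt} (hq : q ≠ 0) (r : GaussianInt) :
    ediam (approxBall τ R (q, r)) ^ s ≤
      {r | gnorm r ≤ √2 * (R + √2) * gnorm q}.indicator
        (fun _ => ENNReal.ofReal (2 * (√2 * gnorm q ^ (-(1 + τ)))) ^ s) r := by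
  set ρ := √2 * gnorm q ^ (-(1 + τ))
  have hρ : ρ ≤ √2 := mul_le_of_le_one_right (by positivity)
    (Real.rpow_le_one_of_one_le_of_nonpos (one_le_gnorm hq) (by linarith))
  rcases (approxBall τ R (q, r)).eq_empty_or_nonempty with h | ⟨x, hxq, hxR⟩
  · rw [h, ediam_empty, ENNReal.zero_rpow_of_pos hs]; exact zero_le
  have hxq : dist x ((r : ℂ) / q) ≤ ρ := hxq
  rw [mem_closedBall_zero_iff] at hxR
  rw [indicator_of_mem]
  · exact ENNReal.rpow_le_rpow ((ediam_mono inter_subset_left).trans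
      (ediam_closedBall_le_ofReal _ _)) hs.le
  · refine (gnorm_le_of_dist_div_le hq hxq).trans ?_
    exact mul_le_mul_of_nonneg_right (by gcongr) (gnorm_nonneg q)

lemma two_mul_add_one_sq_mul_rpow_le {C c g a s : ℝ} (hC : 0 ≤ C) (hc : 0 ≤ c) (hg : 1 ≤ g) :
    (2 * (C * g) + 1) ^ 2 * (2 * (c * g ^ (-a))) ^ s ≤
      (2 * C + 1) ^ 2 * (2 * c) ^ s * g ^ (2 - a * s) := by
  have hg0 : 0 < g := one_pos.trans_le hg
  rw [← mul_assoc 2 c, Real.mul_rpow (by positivity) (Real.rpow_nonneg hg0.le _),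
    ← Real.rpow_mul hg0.le, sub_eq_add_neg, Real.rpow_add hg0, Real.rpow_two, neg_mul]
  calc (2 * (C * g) + 1) ^ 2 * ((2 * c) ^ s * g ^ (-(a * s)))
      ≤ ((2 * C + 1) * g) ^ 2 * ((2 * c) ^ s * g ^ (-(a * s))) := by gcongr; nlinarith
    _ = _ := by ring

lemma tsum_ediam_approxBall_rpow_le {τ R s : ℝ} (hτ : -1 < τ) (hR : 0 ≤ R) (hs : 0 < s)
    (q : GaussianInt) :
    ∑' r, ediam (approxBall τ R (q, r)) ^ s ≤
      ENNReal.ofReal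
        ((2 * (√2 * (R + √2)) + 1) ^ 2 * (2 * √2) ^ s * gnorm q ^ (2 - (1 + τ) * s)) := by
  set g := gnorm q
  set ρ := √2 * g ^ (-(1 + τ))
  rcases eq_or_ne q 0 with rfl | hq
  · have hρ : ρ = 0 := by
      simp only [ρ, show g = 0 by simp [g, gnorm], Real.zero_rpow (by linarith : -(1 + τ) ≠ 0),
        mul_zero]
    refine le_of_eq_of_le (ENNReal.tsum_eq_zero.2 fun r => ?_) zero_le
    have hdiam : ediam (approxBall τ R (0, r)) ≤ ENNReal.ofReal (2 * ρ) :=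
      (ediam_mono inter_subset_left).trans (ediam_closedBall_le_ofReal _ _)
    rw [hρ, mul_zero, ENNReal.ofReal_zero, nonpos_iff_eq_zero] at hdiam
    rw [hdiam, ENNReal.zero_rpow_of_pos hs]
  set C := √2 * (R + √2)
  have hg : 1 ≤ g := one_le_gnorm hq
  calc ∑' r, ediam (approxBall τ R (q, r)) ^ s
      ≤ ∑' r, {r | gnorm r ≤ C * g}.indicator (fun _ => ENNReal.ofReal (2 * ρ) ^ s) r :=
        ENNReal.tsum_le_tsum (ediam_approxBall_rpow_le_indicator hτ hs hq)
    _ = {r | gnorm r ≤ C * g}.encard * ENNReal.ofReal (2 * ρ) ^ s := by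
        rw [← tsum_subtype, ENNReal.tsum_set_const]
    _ ≤ ENNReal.ofReal ((2 * (C * g) + 1) ^ 2) * ENNReal.ofReal (2 * ρ) ^ s := by
        gcongr; exact encard_setOf_gnorm_le (by positivity)
    _ ≤ _ := by
        rw [ENNReal.ofReal_rpow_of_nonneg (by positivity) hs.le,
          ← ENNReal.ofReal_mul (by positivity)]
        exact ENNReal.ofReal_le_ofReal
          (two_mul_add_one_sq_mul_rpow_le (by positivity) (by positivity) hg)

lemma tsum_ediam_approxBall_rpow_ne_top {τ R s : ℝ} (hτ : -1 < τ) (hR : 0 ≤ R) (hs : 0 < s)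
    (hτs : 4 < (1 + τ) * s) : ∑' p, ediam (approxBall τ R p) ^ s ≠ ∞ := by
  set A := (2 * (√2 * (R + √2)) + 1) ^ 2 * (2 * √2) ^ s
  have hsum : Summable fun q => A * gnorm q ^ (2 - (1 + τ) * s) := by
    simpa only [neg_sub] using
      (summable_gnorm_rpow_neg (k := (1 + τ) * s - 2) (by linarith)).mul_left A
  refine ne_top_of_le_ne_top ENNReal.ofReal_ne_top
    (b := ENNReal.ofReal (∑' q, A * gnorm q ^ (2 - (1 + τ) * s))) ?_
  calc ∑' p, ediam (approxBall τ R p) ^ s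
      = ∑' q, ∑' r, ediam (approxBall τ R (q, r)) ^ s :=
        ENNReal.tsum_prod (f := fun q r => ediam (approxBall τ R (q, r)) ^ s)
    _ ≤ ∑' q, ENNReal.ofReal (A * gnorm q ^ (2 - (1 + τ) * s)) :=
        ENNReal.tsum_le_tsum fun q => tsum_ediam_approxBall_rpow_le hτ hR hs q
    _ = ENNReal.ofReal (∑' q, A * gnorm q ^ (2 - (1 + τ) * s)) :=
        (ENNReal.ofReal_tsum_of_nonneg
          (fun q => mul_nonneg (by positivity) (Real.rpow_nonneg (gnorm_nonneg q) _)) hsum).symm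

lemma hausdorffMeasure_limsup_approxRegion_eq_zero {τ s : ℝ} (hτ : 0 < τ) (hs : 0 < s)
    (hτs : 4 < (1 + τ) * s) : μH[s] (limsup (approxRegion τ) cofinite) = 0 := by
  have hcover : limsup (approxRegion τ) cofinite ⊆ ⋃ R : ℕ, limsup (approxBall τ R) cofinite :=
    fun x hx =>
      have ⟨R, hR⟩ := exists_nat_ge ‖x‖
      mem_iUnion.2 ⟨R, limsup_approxRegion_inter_closedBall_subset hτ.ne' R
        ⟨hx, mem_closedBall_zero_iff.2 hR⟩⟩
  exact measure_mono_null hcover <| measure_iUnion_null fun R =>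
    hausdorffMeasure_limsup_cofinite_eq_zero hs
      (tsum_ediam_approxBall_rpow_ne_top (by linarith) R.cast_nonneg hs hτs)

theorem stmt16 (τ : ℝ) (hτ : 1 < τ) :
    dimH {x : ℂ | {p : GaussianInt × GaussianInt |
        snorm2 (toComplex p.1 * x - toComplex p.2) ≤ gnorm p.1 ^ (-τ)}.Infinite} ≤
      ENNReal.ofReal (min (4 / (1 + τ)) 2) := by
  have hE : {x : ℂ | {p : GaussianInt × GaussianInt |
      snorm2 (toComplex p.1 * x - toComplex p.2) ≤ gnorm p.1 ^ (-τ)}.Infinite} =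
      limsup (approxRegion τ) cofinite := by
    ext x
    rw [mem_limsup_iff_frequently_mem, frequently_cofinite_iff_infinite]
    rfl
  have hτ1 : 0 < 1 + τ := by linarith
  rw [hE, min_eq_left ((div_le_iff₀ hτ1).2 (by linarith))]
  refine dimH_le fun s hs => ?_
  by_contra! hlt
  have hs4 : 4 < (1 + τ) * s := by
    rw [ENNReal.ofReal_lt_coe_iff (by positivity), div_lt_iff₀ hτ1] at hlt
    linarith
  have hs0 : (0 : ℝ) < s := by nlinarith
  exact ENNReal.top_ne_zero
    (hs ▸ hausdorffMeasure_limsup_approxRegion_eq_zero (by linarith) hs0 hs4)
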